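/- For every integer n ≥ 22 and all x ∈ [0,1], the polynomial inequality W_{n−1}(x) ≤ 2·R_{n−2}(x) holds, where W_m(x) = Σ_{i=1}^{m} x^i/i and R_m(x) = W_m(x) − x^m. -/

import Mathlib

/-! For `0 ≤ x ≤ 1` every term `x ^ i / i` of `W_m(x)` is at least `x ^ m / i`, so
`W_m(x) ≥ H_m x ^ m ≥ 3 x ^ m` as soon as the harmonic number `H_m` reaches `3` (from `m = 11` on).
Since the extra term of `W_{m+1}` is at most `x ^ m`, this gives
`W_{m+1}(x) ≤ W_m(x) + x ^ m ≤ 2 W_m(x) - 2 x ^ m = 2 R_m(x)`. -/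

noncomputable def Wpoly (m : ℕ) (x : ℝ) : ℝ := ∑ i ∈ Finset.Icc 1 m, x ^ i / i

noncomputable def Rpoly (m : ℕ) (x : ℝ) : ℝ := Wpoly m x - x ^ m

theorem harmonic_monotone : Monotone harmonic :=
  monotone_nat_of_le_succ fun n => by
    rw [harmonic_succ]
    exact le_add_of_nonneg_right (by positivity)

theorem three_le_harmonic {m : ℕ} (hm : 11 ≤ m) : 3 ≤ harmonic m :=
  (by norm_num [harmonic, Finset.sum_range_succ] : (3 : ℚ) ≤ harmonic 11).trans
    (harmonic_monotone hm)

theorem Wpoly_succ (m : ℕ) (x : ℝ) : Wpoly (m + 1) x = Wpoly m x + x ^ (m + 1) / (m + 1) := by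
  rw [Wpoly, Finset.sum_Icc_succ_top (by omega), Nat.cast_succ, ← Wpoly]

theorem pow_mul_harmonic_le_Wpoly (m : ℕ) {x : ℝ} (hx0 : 0 ≤ x) (hx1 : x ≤ 1) :
    x ^ m * harmonic m ≤ Wpoly m x := by
  rw [harmonic_eq_sum_Icc, Rat.cast_sum, Finset.mul_sum, Wpoly]
  refine Finset.sum_le_sum fun i hi => ?_
  rw [Rat.cast_inv, Rat.cast_natCast, ← div_eq_mul_inv]
  exact div_le_div_of_nonneg_right (pow_le_pow_of_le_one hx0 hx1 (Finset.mem_Icc.mp hi).2)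
    i.cast_nonneg

theorem Wpoly_succ_le_two_mul_Rpoly {m : ℕ} (hm : 11 ≤ m) {x : ℝ} (hx0 : 0 ≤ x) (hx1 : x ≤ 1) :
    Wpoly (m + 1) x ≤ 2 * Rpoly m x := by
  have hW : 3 * x ^ m ≤ Wpoly m x :=
    calc 3 * x ^ m ≤ x ^ m * harmonic m := by
          rw [mul_comm]
          gcongr
          exact_mod_cast three_le_harmonic hm
      _ ≤ Wpoly m x := pow_mul_harmonic_le_Wpoly m hx0 hx1
  have hlast : x ^ (m + 1) / (m + 1) ≤ x ^ m :=
    calc x ^ (m + 1) / (m + 1) ≤ x ^ (m + 1) :=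
          div_le_self (by positivity) (by linarith [m.cast_nonneg (α := ℝ)])
      _ ≤ x ^ m := pow_le_pow_of_le_one hx0 hx1 m.le_succ
  rw [Wpoly_succ, Rpoly]
  linarith

theorem stmt15 (n : ℕ) (hn : 22 ≤ n) :
    ∀ x ∈ Set.Icc (0 : ℝ) 1, Wpoly (n - 1) x ≤ 2 * Rpoly (n - 2) x := by
  rintro x ⟨hx0, hx1⟩
  obtain ⟨m, rfl⟩ : ∃ m, n = m + 2 := ⟨n - 2, by omega⟩
  exact Wpoly_succ_le_two_mul_Rpoly (by omega) hx0 hx1
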